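/- For all positive integers n, m, k, if k * (2^n - 1) = 2^m - 1 and k > 1, then k ≥ 2^n + 1. -/

import Mathlib

/-!
If `b ^ n - 1 ∣ b ^ m - 1` then `n ∣ m`, because `(b ^ m - 1) % (b ^ n - 1) = b ^ (m % n) - 1`.
Writing `m = n * d`, the quotient `k` exceeds `1` only if `d ≥ 2`, and then
`k * (b ^ n - 1) = b ^ m - 1 ≥ b ^ (2 * n) - 1 = (b ^ n + 1) * (b ^ n - 1)`.
-/

namespace Nat

theorem dvd_of_pow_sub_one_dvd_pow_sub_one {b n m : ℕ} (hb : 1 < b)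
    (h : b ^ n - 1 ∣ b ^ m - 1) : n ∣ m := by
  rw [Nat.dvd_iff_mod_eq_zero, pow_sub_one_mod_pow_sub_one, Nat.sub_eq_zero_iff_le] at h
  rw [Nat.dvd_iff_mod_eq_zero, ← Nat.le_zero]
  exact (Nat.pow_le_pow_iff_right hb).mp (by rwa [pow_zero])

theorem pow_add_one_le_of_mul_pow_sub_one_eq {b n m k : ℕ} (hb : 1 < b) (hn : 0 < n)
    (h : k * (b ^ n - 1) = b ^ m - 1) (hk : 1 < k) : b ^ n + 1 ≤ k := by
  have hpos : 0 < b ^ n - 1 := Nat.sub_pos_of_lt (Nat.one_lt_pow hn.ne' hb)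
  obtain ⟨d, rfl⟩ : n ∣ m := dvd_of_pow_sub_one_dvd_pow_sub_one hb (Dvd.intro_left k h)
  have hd : 2 ≤ d := by
    by_contra! hd
    have hle : b ^ (n * d) ≤ b ^ n :=
      Nat.pow_le_pow_right hb.le (by simpa using Nat.mul_le_mul_left n (by omega : d ≤ 1))
    have : k * (b ^ n - 1) ≤ 1 * (b ^ n - 1) := by
      rw [h, one_mul]
      exact Nat.sub_le_sub_right hle 1
    exact (Nat.le_of_mul_le_mul_right this hpos).not_gt hk
  refine Nat.le_of_mul_le_mul_right ?_ hpos
  calc (b ^ n + 1) * (b ^ n - 1) = b ^ (n * 2) - 1 := by rw [pow_mul, ← Nat.sq_sub_sq, one_pow]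
    _ ≤ b ^ (n * d) - 1 :=
      Nat.sub_le_sub_right (Nat.pow_le_pow_right hb.le (Nat.mul_le_mul_left n hd)) 1
    _ = k * (b ^ n - 1) := h.symm

end Nat

theorem stmt1_general (n m k : ℕ) (hn : 0 < n)
    (h : k * (2^n - 1) = 2^m - 1) (h1 : 1 < k) : k ≥ 2^n + 1 :=
  Nat.pow_add_one_le_of_mul_pow_sub_one_eq one_lt_two hn h h1

theorem stmt1 (n m k : ℕ) (hn : 0 < n) (hm : 0 < m) (hk : 0 < k)
    (h : k * (2^n - 1) = 2^m - 1) (h1 : 1 < k) : k ≥ 2^n + 1 :=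
  stmt1_general n m k hn h h1
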